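/- σ-finite mixtures of extended nonnegative supermartingales are extended nonnegative supermartingales: let {M(θ)}_{θ∈Θ} be a family of ENSMs on a common filtered probability space such that for each n, (ω,θ) ↦ M(θ)_n(ω) is F_n⊗B-measurable and (ω,θ) ↦ E[M(θ)_n|F_{n−1}](ω) is F_{n−1}⊗B-measurable. If μ is a σ-finite measure on (Θ,B), then M^mix_n := ∫ M(θ)_n μ(dθ) defines an extended nonnegative supermartingale. The analogous statement holds with 'martingale' in place of 'supermartingale'. -/

import Mathlib

open MeasureTheory Filter
open scoped ENNReal NNReal

/-- Extended conditional expectation of a `[0,∞]`-valued random variable `X` given a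
sub-σ-algebra `F`: the (increasing) limit of the classical conditional expectations of
the truncations `X ∧ n`. -/
noncomputable def extCondExp {Ω : Type*} {mΩ : MeasurableSpace Ω} (μ : Measure Ω)
    (F : MeasurableSpace Ω) (X : Ω → ℝ≥0∞) : Ω → ℝ≥0∞ :=
  fun ω => ⨆ n : ℕ, ENNReal.ofReal ((μ[fun ω' => (min (X ω') n).toReal | F]) ω)

/-- Extended nonnegative supermartingale: a `[0,∞]`-valued adapted process with
`E[M_n | F_{n-1}] ≤ M_{n-1}` a.s. for all `n ≥ 1`, using the extended conditional
expectation. -/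
def IsENSM {Ω : Type*} {mΩ : MeasurableSpace Ω} (μ : Measure Ω)
    (𝒢 : Filtration ℕ mΩ) (M : ℕ → Ω → ℝ≥0∞) : Prop :=
  (∀ n, Measurable[𝒢 n] (M n)) ∧
  ∀ n : ℕ, extCondExp μ (𝒢 n) (M (n + 1)) ≤ᵐ[μ] M n

/-- Extended nonnegative martingale: as `IsENSM` but with a.s. equality. -/
def IsENM {Ω : Type*} {mΩ : MeasurableSpace Ω} (μ : Measure Ω)
    (𝒢 : Filtration ℕ mΩ) (M : ℕ → Ω → ℝ≥0∞) : Prop :=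
  (∀ n, Measurable[𝒢 n] (M n)) ∧
  ∀ n : ℕ, extCondExp μ (𝒢 n) (M (n + 1)) =ᵐ[μ] M n

lemma extCondExp_measurable {Ω : Type*} {mΩ : MeasurableSpace Ω} (μ : Measure Ω)
    (F : MeasurableSpace Ω) (X : Ω → ℝ≥0∞) :
    Measurable[F] (extCondExp μ F X) :=
  Measurable.iSup fun _ => ENNReal.measurable_ofReal.comp stronglyMeasurable_condExp.measurable

lemma iSup_min_natCast (a : ℝ≥0∞) : ⨆ n : ℕ, min a (n : ℝ≥0∞) = a := by
  have h : (⨆ n : ℕ, a ⊓ (n : ℝ≥0∞)) = a ⊓ ⨆ n : ℕ, (n : ℝ≥0∞) := (inf_iSup_eq _ _).symm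
  simpa [ENNReal.iSup_natCast] using h

lemma setLIntegral_extCondExp {Ω : Type*} {mΩ : MeasurableSpace Ω} (μ : Measure Ω)
    [IsFiniteMeasure μ] {F : MeasurableSpace Ω} (hF : F ≤ mΩ) {X : Ω → ℝ≥0∞}
    (hX : Measurable[mΩ] X) {s : Set Ω} (hs : MeasurableSet[F] s) :
    ∫⁻ ω in s, extCondExp μ F X ω ∂μ = ∫⁻ ω in s, X ω ∂μ := by
  set f : ℕ → Ω → ℝ := fun n ω => (min (X ω) n).toReal with hfdef
  have hfm : ∀ n, Measurable[mΩ] (f n) := fun n => (hX.min measurable_const).ennreal_toReal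
  have hfnn : ∀ n ω, 0 ≤ f n ω := fun n ω => ENNReal.toReal_nonneg
  have hmin_ne : ∀ (n : ℕ) ω, min (X ω) (n : ℝ≥0∞) ≠ ∞ := fun n ω =>
    ((min_le_right _ _).trans_lt (ENNReal.natCast_lt_top n)).ne
  have hfb : ∀ n ω, f n ω ≤ n := fun n ω => by
    have := ENNReal.toReal_mono (ENNReal.natCast_ne_top n) (min_le_right (X ω) (n : ℝ≥0∞))
    simpa using this
  have hfi : ∀ n, Integrable (f n) μ := fun n => by
    refine Integrable.mono' (integrable_const (n : ℝ)) ((hfm n).aestronglyMeasurable (μ := μ)) ?_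
    exact Filter.Eventually.of_forall fun ω => by
      rw [Real.norm_of_nonneg (hfnn n ω)]; exact hfb n ω
  have hmono : ∀ n, ∀ ω, f n ω ≤ f (n + 1) ω := fun n ω =>
    ENNReal.toReal_mono (hmin_ne (n + 1) ω)
      (min_le_min le_rfl (by exact_mod_cast Nat.le_succ n))
  have hgmono : ∀ᵐ ω ∂μ, ∀ n, (μ[f n|F]) ω ≤ (μ[f (n + 1)|F]) ω := by
    rw [ae_all_iff]
    exact fun n => condExp_mono (hfi n) (hfi (n + 1)) (Filter.Eventually.of_forall (hmono n))
  have hgnn : ∀ n, 0 ≤ᵐ[μ] μ[f n|F] := fun n =>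
    condExp_nonneg (Filter.Eventually.of_forall fun ω => hfnn n ω)
  have hgmeas : ∀ n, Measurable[mΩ] (μ[f n|F]) := fun n =>
    ((stronglyMeasurable_condExp (m := F) (μ := μ) (f := f n)).mono hF).measurable
  calc ∫⁻ ω in s, extCondExp μ F X ω ∂μ
      = ⨆ n, ∫⁻ ω in s, ENNReal.ofReal ((μ[f n|F]) ω) ∂μ := by
        simp only [extCondExp]
        exact lintegral_iSup' (fun n =>
          (ENNReal.measurable_ofReal.comp (hgmeas n)).aemeasurable.restrict)
          (ae_restrict_of_ae (hgmono.mono fun ω h =>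
            monotone_nat_of_le_succ fun n => ENNReal.ofReal_le_ofReal (h n)))
    _ = ⨆ n : ℕ, ∫⁻ ω in s, min (X ω) (n : ℝ≥0∞) ∂μ := by
        refine iSup_congr fun n => ?_
        rw [← ofReal_integral_eq_lintegral_ofReal ((integrable_condExp (m := F) (μ := μ) (f := f n)).restrict)
          (ae_restrict_of_ae (hgnn n)),
          setIntegral_condExp hF (hfi n) hs,
          ofReal_integral_eq_lintegral_ofReal ((hfi n).restrict)
          (ae_restrict_of_ae (Filter.Eventually.of_forall fun ω => hfnn n ω))]
        refine lintegral_congr fun ω => ?_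
        exact ENNReal.ofReal_toReal (hmin_ne n ω)
    _ = ∫⁻ ω in s, ⨆ n : ℕ, min (X ω) (n : ℝ≥0∞) ∂μ :=
        (lintegral_iSup (μ := μ.restrict s)
          (f := fun (n : ℕ) ω => min (X ω) (n : ℝ≥0∞))
          (fun n => hX.min measurable_const)
          (fun n m hnm ω => min_le_min le_rfl (by exact_mod_cast hnm))).symm
    _ = ∫⁻ ω in s, X ω ∂μ := lintegral_congr fun ω => iSup_min_natCast (X ω)

lemma lintegral_right_meas {Ω Θ : Type*} {m : MeasurableSpace Ω} {mΘ : MeasurableSpace Θ}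
    (ν : Measure Θ) [SFinite ν] {f : Ω × Θ → ℝ≥0∞} (hf : Measurable[m.prod mΘ] f) :
    Measurable[m] fun ω => ∫⁻ θ, f (ω, θ) ∂ν :=
  hf.lintegral_prod_right'


/-- σ-finite mixtures of ENSMs (resp. ENMs) are ENSMs (resp. ENMs):
given joint measurability of `(ω,θ) ↦ M(θ)_n(ω)` and of
`(ω,θ) ↦ E[M(θ)_n | F_{n-1}](ω)`, and a σ-finite measure `ν` on `Θ`, the mixture
`M^mix_n = ∫ M(θ)_n ν(dθ)` is an ENSM (resp. ENM). -/
theorem isENSM_mixture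
    {Ω : Type*} {mΩ : MeasurableSpace Ω} (μ : Measure Ω) [IsProbabilityMeasure μ]
    (𝒢 : Filtration ℕ mΩ) {Θ : Type*} {mΘ : MeasurableSpace Θ}
    (ν : Measure Θ) [SigmaFinite ν] (M : Θ → ℕ → Ω → ℝ≥0∞)
    (hjm : ∀ n, Measurable[(𝒢 n).prod mΘ] (fun p : Ω × Θ => M p.2 n p.1))
    (hjce : ∀ n : ℕ, Measurable[(𝒢 n).prod mΘ]
      (fun p : Ω × Θ => extCondExp μ (𝒢 n) (M p.2 (n + 1)) p.1)) :
    ((∀ θ, IsENSM μ 𝒢 (M θ)) → IsENSM μ 𝒢 (fun n ω => ∫⁻ θ, M θ n ω ∂ν)) ∧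
      ((∀ θ, IsENM μ 𝒢 (M θ)) → IsENM μ 𝒢 (fun n ω => ∫⁻ θ, M θ n ω ∂ν)) := by
  have hGle : ∀ k, 𝒢 k ≤ mΩ := fun k => 𝒢.le k
  have hprodle : ∀ k, (𝒢 k).prod mΘ ≤ mΩ.prod mΘ := fun k =>
    sup_le_sup_right (MeasurableSpace.comap_mono (hGle k)) _
  have hMmeas : ∀ θ n, Measurable[mΩ] (M θ n) := fun θ n =>
    ((hjm n).mono (hprodle n) le_rfl).comp (measurable_prodMk_right (y := θ))
  have hadapt : ∀ n, Measurable[𝒢 n] (fun ω => ∫⁻ θ, M θ n ω ∂ν) := fun n =>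
    lintegral_right_meas ν (hjm n)
  have key : ∀ n : ℕ,
      extCondExp μ (𝒢 n) (fun ω => ∫⁻ θ, M θ (n + 1) ω ∂ν)
        =ᵐ[μ] fun ω => ∫⁻ θ, extCondExp μ (𝒢 n) (M θ (n + 1)) ω ∂ν := by
    intro n
    have hF : 𝒢 n ≤ mΩ := hGle n
    have hXmix : Measurable[mΩ] (fun ω => ∫⁻ θ, M θ (n + 1) ω ∂ν) :=
      lintegral_right_meas ν ((hjm (n + 1)).mono (hprodle (n + 1)) le_rfl)
    have h1 : Measurable[𝒢 n]
        (extCondExp μ (𝒢 n) (fun ω => ∫⁻ θ, M θ (n + 1) ω ∂ν)) :=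
      extCondExp_measurable μ (𝒢 n) _
    have h2 : Measurable[𝒢 n] (fun ω => ∫⁻ θ, extCondExp μ (𝒢 n) (M θ (n + 1)) ω ∂ν) :=
      lintegral_right_meas ν (hjce n)
    have hsets : ∀ s, MeasurableSet[𝒢 n] s →
        ∫⁻ ω in s, extCondExp μ (𝒢 n) (fun ω' => ∫⁻ θ, M θ (n + 1) ω' ∂ν) ω ∂μ
          = ∫⁻ ω in s, (∫⁻ θ, extCondExp μ (𝒢 n) (M θ (n + 1)) ω ∂ν) ∂μ := by
      intro s hs
      have hjm' : AEMeasurable (fun p : Ω × Θ => M p.2 (n + 1) p.1)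
          ((μ.restrict s).prod ν) :=
        ((hjm (n + 1)).mono (hprodle (n + 1)) le_rfl).aemeasurable
      have hjce' : AEMeasurable (fun p : Ω × Θ => extCondExp μ (𝒢 n) (M p.2 (n + 1)) p.1)
          ((μ.restrict s).prod ν) :=
        ((hjce n).mono (hprodle n) le_rfl).aemeasurable
      calc ∫⁻ ω in s, extCondExp μ (𝒢 n) (fun ω' => ∫⁻ θ, M θ (n + 1) ω' ∂ν) ω ∂μ
          = ∫⁻ ω in s, ∫⁻ θ, M θ (n + 1) ω ∂ν ∂μ :=
            setLIntegral_extCondExp μ hF hXmix hs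
        _ = ∫⁻ θ, ∫⁻ ω in s, M θ (n + 1) ω ∂μ ∂ν := lintegral_lintegral_swap hjm'
        _ = ∫⁻ θ, ∫⁻ ω in s, extCondExp μ (𝒢 n) (M θ (n + 1)) ω ∂μ ∂ν :=
            lintegral_congr fun θ =>
              (setLIntegral_extCondExp μ hF (hMmeas θ (n + 1)) hs).symm
        _ = ∫⁻ ω in s, ∫⁻ θ, extCondExp μ (𝒢 n) (M θ (n + 1)) ω ∂ν ∂μ :=
            (lintegral_lintegral_swap hjce').symm
    have htrim : ∀ (g : Ω → ℝ≥0∞), Measurable[𝒢 n] g → ∀ s, MeasurableSet[𝒢 n] s →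
        ∫⁻ ω in s, g ω ∂(μ.trim hF) = ∫⁻ ω in s, g ω ∂μ := by
      intro g hg s hs
      rw [← lintegral_indicator hs, ← lintegral_indicator (hF s hs),
        lintegral_trim hF (hg.indicator hs)]
    have heq := ae_eq_of_forall_setLIntegral_eq_of_sigmaFinite (μ := μ.trim hF)
      h1 h2 (fun s hs _ => by
        rw [htrim _ h1 s hs, htrim _ h2 s hs]; exact hsets s hs)
    exact ae_eq_of_ae_eq_trim heq
  constructor
  · intro h
    refine ⟨hadapt, fun n => ?_⟩
    have hae : ∀ᵐ ω ∂μ, ∀ᵐ θ ∂ν, extCondExp μ (𝒢 n) (M θ (n + 1)) ω ≤ M θ n ω := by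
      have hset : MeasurableSet
          {p : Ω × Θ | extCondExp μ (𝒢 n) (M p.2 (n + 1)) p.1 ≤ M p.2 n p.1} :=
        measurableSet_le ((hjce n).mono (hprodle n) le_rfl)
          ((hjm n).mono (hprodle n) le_rfl)
      rw [Measure.ae_ae_comm hset]
      exact Filter.Eventually.of_forall fun θ => (h θ).2 n
    filter_upwards [key n, hae] with ω hk hω
    show extCondExp μ (𝒢 n) (fun ω' => ∫⁻ θ, M θ (n + 1) ω' ∂ν) ω ≤ ∫⁻ θ, M θ n ω ∂ν
    rw [hk]
    exact lintegral_mono_ae hω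
  · intro h
    refine ⟨hadapt, fun n => ?_⟩
    have hae : ∀ᵐ ω ∂μ, ∀ᵐ θ ∂ν, extCondExp μ (𝒢 n) (M θ (n + 1)) ω = M θ n ω := by
      have hm1 := (hjce n).mono (hprodle n) (le_refl _)
      have hm2 := (hjm n).mono (hprodle n) (le_refl _)
      have hset : MeasurableSet
          {p : Ω × Θ | extCondExp μ (𝒢 n) (M p.2 (n + 1)) p.1 = M p.2 n p.1} := by
        have : {p : Ω × Θ | extCondExp μ (𝒢 n) (M p.2 (n + 1)) p.1 = M p.2 n p.1}
            = {p : Ω × Θ | extCondExp μ (𝒢 n) (M p.2 (n + 1)) p.1 ≤ M p.2 n p.1}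
              ∩ {p : Ω × Θ | M p.2 n p.1 ≤ extCondExp μ (𝒢 n) (M p.2 (n + 1)) p.1} := by
          ext p; simp [Set.mem_setOf_eq, le_antisymm_iff]
        rw [this]
        exact (measurableSet_le hm1 hm2).inter (measurableSet_le hm2 hm1)
      rw [Measure.ae_ae_comm hset]
      exact Filter.Eventually.of_forall fun θ => (h θ).2 n
    filter_upwards [key n, hae] with ω hk hω
    show extCondExp μ (𝒢 n) (fun ω' => ∫⁻ θ, M θ (n + 1) ω' ∂ν) ω = ∫⁻ θ, M θ n ω ∂ν
    rw [hk]
    exact lintegral_congr_ae hω
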